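/- Consider the LTS A with states {⊥, s₀,s₁,s₂,s₃, t₀,t₁, q₀,q₁}, initial state ⊥, events {x,y,a,u,v,w}, and edges ⊥--u-->s₀, ⊥--v-->t₀, ⊥--w-->q₀, s₀--x-->s₁, s₁--y-->s₂, s₂--x-->s₃, t₀--x-->t₁, t₀--a-->t₁, q₀--y-->q₁, q₀--a-->q₁. Then there is no region R=(sup,con,pro) of A with con(x) > sup(s₁); i.e., the event/state separation atom (x, s₁) is unsolvable, and hence A does not have the event/state separation property. -/
import Mathlib


inductive St : Type | bot | s0 | s1 | s2 | s3 | t0 | t1 | q0 | q1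
deriving DecidableEq

inductive Ev : Type | x | y | a | u | v | w
deriving DecidableEq

/-- The transition function of the LTS `A` of Figure 1. -/
def deltaA : St → Ev → Option St
  | .bot, .u => some .s0
  | .bot, .v => some .t0
  | .bot, .w => some .q0
  | .s0, .x => some .s1
  | .s1, .y => some .s2
  | .s2, .x => some .s3
  | .t0, .x => some .t1
  | .t0, .a => some .t1
  | .q0, .y => some .q1
  | .q0, .a => some .q1
  | _, _ => none

/-- No region of `A` solves the event/state separation atom `(x, s₁)`:
there is no region with `con x > sup s₁`. Hence `A` does not have the ESSP. -/
theorem essa_x_s1_unsolvable (sup : St → ℕ) (con pro : Ev → ℕ)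
    (hR : ∀ s e s', deltaA s e = some s' →
      con e ≤ sup s ∧ sup s' = sup s - con e + pro e) :
    ¬ sup St.s1 < con Ev.x := by
  intro h
  have h1 := hR .s0 .x .s1 rfl
  have h2 := hR .s1 .y .s2 rfl
  have h3 := hR .s2 .x .s3 rfl
  have h4 := hR .t0 .x .t1 rfl
  have h5 := hR .t0 .a .t1 rfl
  have h6 := hR .q0 .y .q1 rfl
  have h7 := hR .q0 .a .q1 rfl
  omega
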